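/- For a connected graph Σ with at least two vertices that is not a cycle, the distance-2 graph of the subdivision graph S(Σ) has exactly two connected components, one isomorphic to Σ and the other isomorphic to the line graph L(Σ). -/

import Mathlib

open SimpleGraph

/-- The subdivision graph of a simple graph `S`: vertex set `V ⊕ E(S)`,
with `x ∈ V` adjacent to `e ∈ E(S)` iff `x ∈ e`. -/
def subdiv {V : Type*} (S : SimpleGraph V) : SimpleGraph (V ⊕ S.edgeSet) where
  Adj a b :=
    (∃ (x : V) (e : S.edgeSet), a = Sum.inl x ∧ b = Sum.inr e ∧ x ∈ (e : Sym2 V)) ∨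
    (∃ (x : V) (e : S.edgeSet), b = Sum.inl x ∧ a = Sum.inr e ∧ x ∈ (e : Sym2 V))
  symm := ⟨fun a b h => Or.elim h (fun ⟨x, e, h1, h2, h3⟩ => Or.inr ⟨x, e, h1, h2, h3⟩)
    (fun ⟨x, e, h1, h2, h3⟩ => Or.inl ⟨x, e, h1, h2, h3⟩)⟩
  loopless := ⟨by
    rintro a (⟨x, e, h1, h2, _⟩ | ⟨x, e, h1, h2, _⟩) <;> rw [h1] at h2 <;>
      first | exact Sum.inl_ne_inr h2 | exact Sum.inr_ne_inl h2⟩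

/-- The distance-2 graph of a graph `Γ`: same vertex set, adjacent iff at distance 2. -/
def distTwo {W : Type*} (Γ : SimpleGraph W) : SimpleGraph W where
  Adj a b := Γ.dist a b = 2
  symm := ⟨fun a b h => by show Γ.dist b a = 2; rw [SimpleGraph.dist_comm]; exact h⟩
  loopless := ⟨fun a h => by
    have h' : Γ.dist a a = 2 := h
    rw [SimpleGraph.dist_self] at h'
    omega⟩

lemma dist_eq_two_iff' {W : Type*} (Γ : SimpleGraph W) {a b : W} :
    Γ.dist a b = 2 ↔ a ≠ b ∧ ¬Γ.Adj a b ∧ ∃ c, Γ.Adj a c ∧ Γ.Adj c b := by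
  constructor
  · intro h
    have hne0 : Γ.dist a b ≠ 0 := by omega
    obtain ⟨hne, hr⟩ := SimpleGraph.dist_ne_zero_iff_ne_and_reachable.mp hne0
    refine ⟨hne, fun hadj => by simp [SimpleGraph.dist_eq_one_iff_adj.mpr hadj] at h, ?_⟩
    obtain ⟨p, hp⟩ := hr.exists_walk_length_eq_dist
    rw [h] at hp
    refine ⟨p.getVert 1, ?_, ?_⟩
    · have := p.adj_getVert_succ (i := 0) (by omega)
      simpa using this
    · have := p.adj_getVert_succ (i := 1) (by omega)
      have h2 : p.getVert 2 = b := by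
        have := p.getVert_length
        rwa [hp] at this
      rwa [h2] at this
  · rintro ⟨hne, hnadj, c, h1, h2⟩
    have hle : Γ.dist a b ≤ 2 := by
      have := SimpleGraph.dist_le (Walk.cons h1 (Walk.cons h2 Walk.nil))
      simpa using this
    have hne0 : Γ.dist a b ≠ 0 :=
      SimpleGraph.dist_ne_zero_iff_ne_and_reachable.mpr
        ⟨hne, ⟨Walk.cons h1 (Walk.cons h2 Walk.nil)⟩⟩
    have hne1 : Γ.dist a b ≠ 1 := fun h =>
      hnadj (SimpleGraph.dist_eq_one_iff_adj.mp h)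
    omega

section Aux

variable {V : Type*} {S : SimpleGraph V}

lemma subdiv_adj_inl_inr {x : V} {e : S.edgeSet} :
    (subdiv S).Adj (Sum.inl x) (Sum.inr e) ↔ x ∈ (e : Sym2 V) := by
  constructor
  · rintro (⟨y, f, h1, h2, h3⟩ | ⟨y, f, h1, h2, h3⟩)
    · cases h1; cases h2; exact h3
    · exact absurd h1 Sum.inr_ne_inl
  · intro h; exact Or.inl ⟨x, e, rfl, rfl, h⟩

lemma subdiv_not_adj_inl_inl {x y : V} : ¬ (subdiv S).Adj (Sum.inl x) (Sum.inl y) := by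
  rintro (⟨_, _, h1, h2, _⟩ | ⟨_, _, h1, h2, _⟩) <;> exact Sum.inl_ne_inr h2

lemma subdiv_not_adj_inr_inr {e f : S.edgeSet} : ¬ (subdiv S).Adj (Sum.inr e) (Sum.inr f) := by
  rintro (⟨_, _, h1, h2, _⟩ | ⟨_, _, h1, h2, _⟩) <;> exact Sum.inr_ne_inl h1

lemma dt_inl_inl {x y : V} :
    (distTwo (subdiv S)).Adj (Sum.inl x) (Sum.inl y) ↔ S.Adj x y := by
  show (subdiv S).dist _ _ = 2 ↔ _
  rw [dist_eq_two_iff']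
  constructor
  · rintro ⟨hne, -, c, h1, h2⟩
    cases c with
    | inl z => exact absurd h1 subdiv_not_adj_inl_inl
    | inr e =>
      have hx : x ∈ (e : Sym2 V) := subdiv_adj_inl_inr.mp h1
      have hy : y ∈ (e : Sym2 V) := subdiv_adj_inl_inr.mp h2.symm
      have hxy : x ≠ y := fun h => hne (by rw [h])
      have : (e : Sym2 V) = s(x, y) := ((Sym2.mem_and_mem_iff hxy).mp ⟨hx, hy⟩)
      exact S.mem_edgeSet.mp (this ▸ e.2)
  · intro h
    refine ⟨fun hc => h.ne (Sum.inl_injective hc), subdiv_not_adj_inl_inl,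
      Sum.inr ⟨s(x, y), h⟩, ?_, ?_⟩
    · exact subdiv_adj_inl_inr.mpr (by simp)
    · exact ((subdiv S).adj_symm (subdiv_adj_inl_inr.mpr (by simp)))

lemma dt_inr_inr {e f : S.edgeSet} :
    (distTwo (subdiv S)).Adj (Sum.inr e) (Sum.inr f) ↔
      e ≠ f ∧ ∃ v, v ∈ (e : Sym2 V) ∧ v ∈ (f : Sym2 V) := by
  show (subdiv S).dist _ _ = 2 ↔ _
  rw [dist_eq_two_iff']
  constructor
  · rintro ⟨hne, -, c, h1, h2⟩
    cases c with
    | inl z =>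
      exact ⟨fun h => hne (by rw [h]),
        z, subdiv_adj_inl_inr.mp h1.symm, subdiv_adj_inl_inr.mp h2⟩
    | inr g => exact absurd h1 subdiv_not_adj_inr_inr
  · rintro ⟨hne, v, hv1, hv2⟩
    exact ⟨fun h => hne (Sum.inr_injective h), subdiv_not_adj_inr_inr,
      Sum.inl v, (subdiv S).adj_symm (subdiv_adj_inl_inr.mpr hv1),
      subdiv_adj_inl_inr.mpr hv2⟩

lemma dt_not_cross {x : V} {e : S.edgeSet} :
    ¬ (distTwo (subdiv S)).Adj (Sum.inl x) (Sum.inr e) := by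
  intro h
  rw [show ((distTwo (subdiv S)).Adj (Sum.inl x) (Sum.inr e)) =
    ((subdiv S).dist (Sum.inl x) (Sum.inr e) = 2) from rfl, dist_eq_two_iff'] at h
  obtain ⟨-, -, c, h1, h2⟩ := h
  cases c with
  | inl z => exact absurd h1 subdiv_not_adj_inl_inl
  | inr g => exact absurd h2 subdiv_not_adj_inr_inr

lemma dt_adj_isLeft {a b : V ⊕ S.edgeSet} (h : (distTwo (subdiv S)).Adj a b) :
    a.isLeft = b.isLeft := by
  cases a with
  | inl x => cases b with
    | inl y => rfl
    | inr e => exact absurd h dt_not_cross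
  | inr e => cases b with
    | inl y => exact absurd h.symm dt_not_cross
    | inr f => rfl

lemma reach_inr_of_walk {u p : V} (w : S.Walk u p) :
    ∀ (e f : S.edgeSet), u ∈ (e : Sym2 V) → p ∈ (f : Sym2 V) →
      (distTwo (subdiv S)).Reachable (Sum.inr e) (Sum.inr f) := by
  induction w with
  | nil =>
    intro e f he hf
    by_cases hef : e = f
    · rw [hef]
    · exact (dt_inr_inr.mpr ⟨hef, _, he, hf⟩).reachable
  | @cons u v p h w ih =>
    intro e f he hf
    have hg : s(u, v) ∈ S.edgeSet := h
    set g : S.edgeSet := ⟨s(u, v), hg⟩ with hgdef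
    have step : (distTwo (subdiv S)).Reachable (Sum.inr e) (Sum.inr g) := by
      by_cases heg : e = g
      · rw [heg]
      · exact (dt_inr_inr.mpr ⟨heg, u, he, by simp [hgdef]⟩).reachable
    exact step.trans (ih g f (by simp [hgdef]) hf)

end Aux

/-- For a connected graph `S` with at least two vertices that is not a cycle, the
distance-2 graph of the subdivision graph has exactly two connected components (the
original vertices and the edge-vertices), one isomorphic to `S` and the other isomorphic
to the line graph of `S`. -/
theorem stmt_19 {V : Type*} (S : SimpleGraph V) (hconn : S.Connected) (hV : Nontrivial V)
    (hnc : ∀ n : ℕ, IsEmpty (S ≃g SimpleGraph.cycleGraph n)) :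
    (∀ a b : V ⊕ S.edgeSet,
      (distTwo (subdiv S)).Reachable a b ↔ a.isLeft = b.isLeft) ∧
    Nonempty ((distTwo (subdiv S)).induce (Set.range Sum.inl) ≃g S) ∧
    Nonempty ((distTwo (subdiv S)).induce (Set.range Sum.inr) ≃g S.lineGraph) := by
  haveI : Nonempty S.edgeSet := by
    obtain ⟨x, y, hxy⟩ := hV
    obtain ⟨w⟩ := hconn x y
    cases w with
    | nil => exact absurd rfl hxy
    | cons h _ => exact ⟨⟨_, S.mem_edgeSet.mpr h⟩⟩
  have reach_inl : ∀ x y : V,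
      (distTwo (subdiv S)).Reachable (Sum.inl x) (Sum.inl y) := by
    intro x y
    obtain ⟨w⟩ := hconn x y
    induction w with
    | nil => exact Reachable.refl _
    | @cons u v p h w ih => exact (dt_inl_inl.mpr h).reachable.trans ih
  refine ⟨?_, ?_, ?_⟩
  · intro a b
    constructor
    · intro h
      obtain ⟨w⟩ := h
      induction w with
      | nil => rfl
      | cons h w ih => exact (dt_adj_isLeft h).trans ih
    · intro h
      cases a with
      | inl x => cases b with
        | inl y => exact reach_inl x y
        | inr e => simp at h
      | inr e => cases b with
        | inl y => simp at h
        | inr f =>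
          obtain ⟨eo, he⟩ := e
          induction eo using Sym2.ind with
          | _ u1 u2 =>
          obtain ⟨fo, hf⟩ := f
          induction fo using Sym2.ind with
          | _ v1 v2 =>
          obtain ⟨w⟩ := hconn u1 v1
          exact reach_inr_of_walk w ⟨s(u1, u2), he⟩ ⟨s(v1, v2), hf⟩ (by simp) (by simp)
  · refine ⟨⟨(Equiv.ofInjective Sum.inl Sum.inl_injective).symm, ?_⟩⟩
    rintro ⟨a, x, rfl⟩ ⟨b, y, rfl⟩
    have hx : (Equiv.ofInjective (Sum.inl : V → V ⊕ S.edgeSet)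
        Sum.inl_injective).symm ⟨Sum.inl x, ⟨x, rfl⟩⟩ = x := by
      simp only [Equiv.ofInjective, Equiv.coe_fn_symm_mk]
      first
        | exact Function.leftInverse_invFun Sum.inl_injective _
        | exact Function.leftInverse_invFun Sum.inr_injective _
    have hy : (Equiv.ofInjective (Sum.inl : V → V ⊕ S.edgeSet)
        Sum.inl_injective).symm ⟨Sum.inl y, ⟨y, rfl⟩⟩ = y := by
      simp only [Equiv.ofInjective, Equiv.coe_fn_symm_mk]
      first
        | exact Function.leftInverse_invFun Sum.inl_injective _
        | exact Function.leftInverse_invFun Sum.inr_injective _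
    rw [hx, hy]
    simp only [SimpleGraph.comap_adj, Function.Embedding.coe_subtype]
    exact dt_inl_inl.symm
  · refine ⟨⟨(Equiv.ofInjective Sum.inr Sum.inr_injective).symm, ?_⟩⟩
    rintro ⟨a, e, rfl⟩ ⟨b, f, rfl⟩
    have hx : (Equiv.ofInjective (Sum.inr : S.edgeSet → V ⊕ S.edgeSet)
        Sum.inr_injective).symm ⟨Sum.inr e, ⟨e, rfl⟩⟩ = e := by
      simp only [Equiv.ofInjective, Equiv.coe_fn_symm_mk]
      first
        | exact Function.leftInverse_invFun Sum.inl_injective _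
        | exact Function.leftInverse_invFun Sum.inr_injective _
    have hy : (Equiv.ofInjective (Sum.inr : S.edgeSet → V ⊕ S.edgeSet)
        Sum.inr_injective).symm ⟨Sum.inr f, ⟨f, rfl⟩⟩ = f := by
      simp only [Equiv.ofInjective, Equiv.coe_fn_symm_mk]
      first
        | exact Function.leftInverse_invFun Sum.inl_injective _
        | exact Function.leftInverse_invFun Sum.inr_injective _
    rw [hx, hy]
    simp only [SimpleGraph.comap_adj, Function.Embedding.coe_subtype]
    rw [SimpleGraph.lineGraph_adj_iff_exists]
    exact dt_inr_inr.symm
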